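/- arXiv:2203.01083 — 2 statements merged into one kernel-verified Lean document; each statement's English description precedes it below -/
import Mathlib

section
/- Let p ∈ (0,1) and let π be the product Bernoulli(p) measure on {0,1}^{E^d}. For every square-integrable real-valued function f on {0,1}^{E^d} with 0 < Var(f) < ∞ and Σ_{k≥1} (E|V_k|)² < ∞, one has Var(f) · log( Var(f) / Σ_{k=1}^∞ (E|V_k|)² ) ≤ Σ_{k=1}^∞ Ent(V_k²). -/
open MeasureTheory ProbabilityTheory
open scoped ENNReal NNReal

noncomputable section

namespace Percolation

/-- Vertices of the lattice `ℤ^d`. -/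
abbrev V (d : ℕ) := Fin d → ℤ

/-- Edges of the nearest-neighbour lattice: `(x, i)` is the edge from `x` to `x + eᵢ`. -/
abbrev Edge (d : ℕ) := V d × Fin d

/-- Percolation configurations: `true` means that the edge is open. -/
abbrev Config (d : ℕ) := Edge d → Bool

/-- The `i`-th unit vector. -/
def unitVec (d : ℕ) (i : Fin d) : V d := fun j => if j = i then 1 else 0

/-- First endpoint of an edge. -/
def src {d : ℕ} (e : Edge d) : V d := e.1

/-- Second endpoint of an edge. -/
def tgt {d : ℕ} (e : Edge d) : V d := e.1 + unitVec d e.2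

/-- The unordered pair of endpoints of an edge. -/
def sym {d : ℕ} (e : Edge d) : Sym2 (V d) := s(src e, tgt e)

/-- The graph whose edges are the open edges of the configuration `ω`. -/
def openGraph (d : ℕ) (ω : Config d) : SimpleGraph (V d) :=
  SimpleGraph.fromRel (fun x y => ∃ i : Fin d, y = x + unitVec d i ∧ ω (x, i) = true)

/-- The open cluster of the vertex `x`. -/
def cluster (d : ℕ) (ω : Config d) (x : V d) : Set (V d) :=
  {y | (openGraph d ω).Reachable x y}

/-- The union of the infinite open clusters (a.s. the unique infinite cluster `C_p`). -/
def infClusters (d : ℕ) (ω : Config d) : Set (V d) :=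
  {x | (cluster d ω x).Infinite}

/-- The `ℓ^∞` distance on `ℤ^d`. -/
def dinf (d : ℕ) (x y : V d) : ℕ :=
  Finset.univ.sup (fun i => (x i - y i).natAbs)

/-- The Euclidean (`ℓ²`) distance on `ℤ^d`. -/
def dist2 (d : ℕ) (x y : V d) : ℝ :=
  Real.sqrt (∑ i, ((x i - y i : ℤ) : ℝ) ^ 2)

/-- The regularized point `x~`: a vertex of the infinite cluster closest to `x`
(ties are broken by a fixed deterministic rule). -/
def tilde (d : ℕ) (ω : Config d) (x : V d) : V d :=
  @dite _ ((infClusters d ω).Nonempty) (Classical.dec _)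
    (fun h => (Nat.sInf_mem (h.image (dinf d x))).choose) (fun _ => x)

/-- Graph distance inside the infinite cluster, `∞` if one of the points is not in it. -/
def DC (d : ℕ) (ω : Config d) (x y : V d) : ℕ∞ :=
  @ite _ (x ∈ infClusters d ω ∧ y ∈ infClusters d ω) (Classical.dec _)
    ((openGraph d ω).edist x y) ⊤

/-- The real number associated with an extended natural number (`∞` is sent to `0`). -/
def toR (a : ℕ∞) : ℝ := ((a : ℝ≥0∞)).toReal

/-- The configuration where the edge `e` has been closed. -/
def closeEdge {d : ℕ} (ω : Config d) (e : Edge d) : Config d := Function.update ω e false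

/-- The regularized point `x~^e` : closest point to `x` in `C_p^e`, the infinite cluster of
`C_p \ {e}`. -/
def tildeE (d : ℕ) (ω : Config d) (e : Edge d) (x : V d) : V d := tilde d (closeEdge ω e) x

/-- Graph distance in `C_p^e` (equivalently, in `C_p \ {e}`), `∞` outside of it. -/
def DCE (d : ℕ) (ω : Config d) (e : Edge d) (x y : V d) : ℕ∞ := DC d (closeEdge ω e) x y

/-- The lattice point `n • x`. -/
def nxV (d : ℕ) (n : ℕ) (x : V d) : V d := (n : ℤ) • x

/-- `ℓ(e) = D^{C_p^e}(0~^e, (nx)~^e) - D^{C_p}(0~, (nx)~)`. -/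
def ell (d : ℕ) (n : ℕ) (x : V d) (e : Edge d) (ω : Config d) : ℝ :=
  toR (DCE d ω e (tildeE d ω e 0) (tildeE d ω e (nxV d n x)))
    - toR (DC d ω (tilde d ω 0) (tilde d ω (nxV d n x)))

/-- The event `R_e = {0~ = 0~^e, (nx)~ = (nx)~^e}`. -/
def Rev (d : ℕ) (n : ℕ) (x : V d) (e : Edge d) : Set (Config d) :=
  {ω | tildeE d ω e 0 = tilde d ω 0 ∧ tildeE d ω e (nxV d n x) = tilde d ω (nxV d n x)}

/-- The Bernoulli law of parameter `p` on `{0,1}` (`true` has mass `p`). -/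
def bernoulliLaw (p : ℝ) : Measure Bool :=
  ENNReal.ofReal p • Measure.dirac true + ENNReal.ofReal (1 - p) • Measure.dirac false

/-- `μ` is an i.i.d. Bernoulli(p) bond percolation measure on the configurations. -/
def IsBernoulli (d : ℕ) (p : ℝ) (μ : Measure (Config d)) : Prop :=
  IsProbabilityMeasure μ ∧
    iIndepFun (fun e (ω : Config d) => ω e) μ ∧
    ∀ e : Edge d, μ.map (fun ω => ω e) = bernoulliLaw p

/-- The critical parameter `p_c(d)` of bond percolation on `ℤ^d`. -/
def pc (d : ℕ) : ℝ :=
  sInf {p : ℝ | p ≤ 1 ∧ ∀ μ : Measure (Config d), IsBernoulli d p μ →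
    0 < μ {ω | (cluster d ω 0).Infinite}}

/-- `γ` is (the edge set of) a geodesic from `a` to `b` in the open graph. -/
def IsGeodesicEdges (d : ℕ) (ω : Config d) (a b : V d) (γ : Set (Edge d)) : Prop :=
  ∃ w : (openGraph d ω).Walk a b,
    (w.length : ℕ∞) = (openGraph d ω).edist a b ∧ γ = {e : Edge d | sym e ∈ w.edges}

/-- `γ` is (the vertex set of) a geodesic from `a` to `b` in the open graph. -/
def IsGeodesicVerts (d : ℕ) (ω : Config d) (a b : V d) (γ : Set (V d)) : Prop :=
  ∃ w : (openGraph d ω).Walk a b,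
    (w.length : ℕ∞) = (openGraph d ω).edist a b ∧ γ = {v : V d | v ∈ w.support}

/-- The box `z + Λ_m = z + [-m,m]^d`. -/
def box (d : ℕ) (z : V d) (m : ℕ) : Set (V d) := {y | ∀ i, |y i - z i| ≤ (m : ℤ)}

/-- Adjacency in the lattice `ℤ^d`. -/
def latticeAdj (d : ℕ) (x y : V d) : Prop :=
  ∃ i : Fin d, y = x + unitVec d i ∨ x = y + unitVec d i

/-- The outer vertex boundary `∂Λ_m` of the box `Λ_m`. -/
def boundary (d : ℕ) (m : ℕ) : Set (V d) :=
  {y | y ∉ box d 0 m ∧ ∃ x ∈ box d 0 m, latticeAdj d x y}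

/-- The box `Λ_m` as a finite set. -/
def boxF (d : ℕ) (m : ℕ) : Finset (V d) :=
  Fintype.piFinset (fun _ : Fin d => Finset.Icc (-(m : ℤ)) (m : ℤ))

/-- `⌊n^{1/4}⌋`, the size of the box used in the geometric average. -/
def mval (n : ℕ) : ℕ := ⌊(n : ℝ) ^ ((4 : ℝ)⁻¹)⌋₊

/-- The geometric average `f = |Λ_m|⁻¹ ∑_{z ∈ Λ_m} D^{C_p}(z~, (nx+z)~)`, `m = ⌊n^{1/4}⌋`. -/
def favg (d : ℕ) (n : ℕ) (x : V d) (ω : Config d) : ℝ :=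
  (∑ z ∈ boxF d (mval n), toR (DC d ω (tilde d ω z) (tilde d ω (nxV d n x + z))))
    / (boxF d (mval n)).card

/-- The entropy `Ent_μ(g) = E_μ[g log (g / E_μ g)]`. -/
def entropy {α : Type*} [MeasurableSpace α] (μ : Measure α) (g : α → ℝ) : ℝ :=
  ∫ a, g a * Real.log (g a / ∫ b, g b ∂μ) ∂μ

/-- The σ-algebra generated by the states of the first `k` edges `e₁ = E 0, …, e_k = E (k-1)`. -/
def coordSigma (d : ℕ) (E : ℕ ≃ Edge d) (k : ℕ) : MeasurableSpace (Config d) :=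
  MeasurableSpace.comap (fun ω (i : Fin k) => ω (E i)) inferInstance

/-- The martingale increment `V_k = E[f | F_k] - E[f | F_{k-1}]`. -/
def mInc (d : ℕ) (E : ℕ ≃ Edge d) (μ : Measure (Config d)) (f : Config d → ℝ) (k : ℕ) :
    Config d → ℝ :=
  μ[f | coordSigma d E k] - μ[f | coordSigma d E (k - 1)]

/-- The discrete derivative `Δ_e f = f ∘ σ_e^0 - f ∘ σ_e^1`. -/
def Delta (d : ℕ) (e : Edge d) (f : Config d → ℝ) (ω : Config d) : ℝ :=
  f (Function.update ω e false) - f (Function.update ω e true)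


section Aux
variable {d : ℕ} (E : ℕ ≃ Edge d)

/-- The projection onto the first `k` coordinates. -/
def cproj (d : ℕ) (E : ℕ ≃ Edge d) (k : ℕ) : Config d → (Fin k → Bool) :=
  fun ω i => ω (E i)

lemma measurable_cproj (k : ℕ) : Measurable (cproj d E k) :=
  measurable_pi_lambda _ fun i => measurable_pi_apply (E i)

lemma coordSigma_le (k : ℕ) : coordSigma d E k ≤ MeasurableSpace.pi :=
  measurable_iff_comap_le.mp (measurable_cproj E k)

lemma coordSigma_mono {k l : ℕ} (h : k ≤ l) : coordSigma d E k ≤ coordSigma d E l := by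
  have hfac : cproj d E k = (fun v (i : Fin k) => v (Fin.castLE h i)) ∘ cproj d E l := by
    funext ω i; simp [cproj]
  have : coordSigma d E k
      = (MeasurableSpace.pi.comap (fun v (i : Fin k) => v (Fin.castLE h i))).comap
          (cproj d E l) := by
    rw [coordSigma, MeasurableSpace.comap_comp, ← hfac]; rfl
  rw [this]
  exact MeasurableSpace.comap_mono
    (measurable_iff_comap_le.mp (measurable_pi_lambda _ fun i => measurable_pi_apply _))

lemma iSup_coordSigma : (⨆ k, coordSigma d E k) = MeasurableSpace.pi := by
  refine le_antisymm (iSup_le fun k => coordSigma_le E k) ?_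
  have hpi : (MeasurableSpace.pi : MeasurableSpace (Config d))
      = ⨆ e : Edge d, MeasurableSpace.comap (fun ω : Config d => ω e) inferInstance := rfl
  rw [hpi]
  refine iSup_le fun e => ?_
  have hfac : (fun ω : Config d => ω e)
      = (fun v : Fin (E.symm e + 1) → Bool => v ⟨E.symm e, Nat.lt_succ_self _⟩)
        ∘ cproj d E (E.symm e + 1) := by
    funext ω; simp [cproj]
  calc MeasurableSpace.comap (fun ω : Config d => ω e) inferInstance
      = (MeasurableSpace.comap (fun v : Fin (E.symm e + 1) → Bool =>
          v ⟨E.symm e, Nat.lt_succ_self _⟩) inferInstance).comap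
            (cproj d E (E.symm e + 1)) := by rw [MeasurableSpace.comap_comp, ← hfac]
    _ ≤ coordSigma d E (E.symm e + 1) :=
        MeasurableSpace.comap_mono (measurable_iff_comap_le.mp (measurable_pi_apply _))
    _ ≤ ⨆ k, coordSigma d E k := le_iSup (coordSigma d E) _

lemma coordSigma_zero : coordSigma d E 0 = ⊥ := by
  have : (fun ω (i : Fin 0) => ω (E i)) = fun _ : Config d => (default : Fin 0 → Bool) := by
    funext ω; exact Subsingleton.elim _ _
  rw [coordSigma, this, MeasurableSpace.comap_const]

/-- A function strongly measurable w.r.t. `coordSigma d E k` is bounded. -/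
lemma bounded_of_coordSigma_stronglyMeasurable {k : ℕ} {h : Config d → ℝ}
    (hsm : StronglyMeasurable[coordSigma d E k] h) : ∃ C, ∀ ω, |h ω| ≤ C := by
  have hm : Measurable[coordSigma d E k] h := hsm.measurable
  have key : ∀ ω ω' : Config d, cproj d E k ω = cproj d E k ω' → h ω = h ω' := by
    intro ω ω' hp
    have hs : MeasurableSet[coordSigma d E k] (h ⁻¹' {h ω}) :=
      hm (measurableSet_singleton _)
    obtain ⟨t, -, hts⟩ := MeasurableSpace.measurableSet_comap.mp hs
    have hω : ω ∈ (fun ω (i : Fin k) => ω (E i)) ⁻¹' t := by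
      rw [hts]; exact Set.mem_preimage.mpr rfl
    have hωt : cproj d E k ω ∈ t := hω
    have hω't : cproj d E k ω' ∈ t := hp ▸ hωt
    have : ω' ∈ h ⁻¹' {h ω} := by rw [← hts]; exact hω't
    exact (Set.mem_singleton_iff.mp this).symm
  -- a section of the projection
  set sec : (Fin k → Bool) → Config d := fun v e =>
    if hh : E.symm e < k then v ⟨E.symm e, hh⟩ else false with hsec
  have hps : ∀ v, cproj d E k (sec v) = v := by
    intro v; funext i
    simp [cproj, hsec, i.isLt]
  have hfac : ∀ ω, h ω = h (sec (cproj d E k ω)) := fun ω =>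
    key ω _ (by rw [hps])
  refine ⟨(Finset.univ : Finset (Fin k → Bool)).sup' ⟨default, Finset.mem_univ _⟩
      (fun v => |h (sec v)|), fun ω => ?_⟩
  rw [hfac ω]
  exact Finset.le_sup' (fun v => |h (sec v)|) (Finset.mem_univ _)

end Aux

section Mart
variable {d : ℕ} {μ : Measure (Config d)} [IsProbabilityMeasure μ] (E : ℕ ≃ Edge d)
  {f : Config d → ℝ}

lemma integrable_of_bdd {h : Config d → ℝ} (hsm : AEStronglyMeasurable h μ)
    {C : ℝ} (hC : ∀ ω, |h ω| ≤ C) : Integrable h μ :=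
  (integrable_const C).mono' hsm (Filter.Eventually.of_forall fun ω => by
    simpa [Real.norm_eq_abs] using hC ω)

set_option maxHeartbeats 1000000 in
set_option synthInstance.maxHeartbeats 1000000 in
lemma hasSum_mInc_sq (hf : MemLp f 2 μ) :
    HasSum (fun k : ℕ => ∫ ω, (mInc d E μ f (k + 1) ω) ^ 2 ∂μ) (variance f μ) := by
  classical
  have hle : ∀ n, coordSigma d E n ≤ MeasurableSpace.pi := coordSigma_le E
  haveI hSF : ∀ n, SigmaFinite (μ.trim (hle n)) := fun n => inferInstance
  have hfi : Integrable f μ := hf.integrable one_le_two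
  set g : ℕ → Config d → ℝ := fun n => μ[f| coordSigma d E n] with hg
  have hgsm : ∀ n, StronglyMeasurable[coordSigma d E n] (g n) :=
    fun n => stronglyMeasurable_condExp
  have hgsm' : ∀ n, StronglyMeasurable (g n) := fun n => (hgsm n).mono (hle n)
  -- integrability of functions measurable w.r.t. some `coordSigma`
  have hIntF : ∀ (n : ℕ) (q : Config d → ℝ), StronglyMeasurable[coordSigma d E n] q →
      Integrable q μ := by
    intro n q hq
    obtain ⟨C, hC⟩ := bounded_of_coordSigma_stronglyMeasurable E hq
    exact integrable_of_bdd (hq.mono (hle n)).aestronglyMeasurable hC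
  have hIntMul : ∀ (n : ℕ) (q h : Config d → ℝ), StronglyMeasurable[coordSigma d E n] q →
      Integrable h μ → Integrable (fun ω => q ω * h ω) μ := by
    intro n q h hq hh
    obtain ⟨C, hC⟩ := bounded_of_coordSigma_stronglyMeasurable E hq
    exact hh.bdd_mul (hq.mono (hle n)).aestronglyMeasurable
      (Filter.Eventually.of_forall (fun ω => (by simpa [Real.norm_eq_abs] using hC ω : ‖q ω‖ ≤ C)))
  -- the pull-out identity
  have hpull : ∀ (n m : ℕ), n ≤ m → ∀ q : Config d → ℝ,
      StronglyMeasurable[coordSigma d E n] q →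
      ∫ ω, q ω * g m ω ∂μ = ∫ ω, q ω * f ω ∂μ := by
    intro n m hnm q hq
    obtain ⟨C, hC⟩ := bounded_of_coordSigma_stronglyMeasurable E hq
    have hq' : StronglyMeasurable[coordSigma d E m] q := hq.mono (coordSigma_mono E hnm)
    have hqf : Integrable (q * f) μ := hfi.bdd_mul (hq.mono (hle n)).aestronglyMeasurable
      (Filter.Eventually.of_forall (fun ω => (by simpa [Real.norm_eq_abs] using hC ω : ‖q ω‖ ≤ C)))
    have h1 : μ[q * f| coordSigma d E m] =ᵐ[μ] q * μ[f| coordSigma d E m] :=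
      condExp_mul_of_stronglyMeasurable_left hq' hqf hfi
    calc ∫ ω, q ω * g m ω ∂μ = ∫ ω, (q * μ[f| coordSigma d E m]) ω ∂μ := rfl
      _ = ∫ ω, (μ[q * f| coordSigma d E m]) ω ∂μ := (integral_congr_ae h1).symm
      _ = ∫ ω, (q * f) ω ∂μ := integral_condExp (hle m)
      _ = ∫ ω, q ω * f ω ∂μ := rfl
  have hcross : ∀ (n : ℕ) (q : Config d → ℝ), StronglyMeasurable[coordSigma d E n] q →
      ∫ ω, q ω * (f ω - g n ω) ∂μ = 0 := by
    intro n q hq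
    rw [show (fun ω => q ω * (f ω - g n ω)) = fun ω => q ω * f ω - q ω * g n ω from
      funext fun ω => by ring]
    rw [integral_sub (hIntMul n q f hq hfi) (hIntMul n q (g n) hq (hIntF n (g n) (hgsm n)))]
    rw [hpull n n le_rfl q hq, sub_self]
  have hcrossV : ∀ (n : ℕ) (q : Config d → ℝ), StronglyMeasurable[coordSigma d E n] q →
      ∫ ω, q ω * (g (n + 1) ω - g n ω) ∂μ = 0 := by
    intro n q hq
    rw [show (fun ω => q ω * (g (n+1) ω - g n ω))
        = fun ω => q ω * g (n+1) ω - q ω * g n ω from funext fun ω => by ring]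
    rw [integral_sub (hIntMul (n+1) q (g (n+1)) (hq.mono (coordSigma_mono E n.le_succ))
          (hIntF (n+1) (g (n+1)) (hgsm (n+1))))
        (hIntMul n q (g n) hq (hIntF n (g n) (hgsm n))),
      hpull n (n+1) n.le_succ q hq, hpull n n le_rfl q hq, sub_self]
  set c : ℝ := ∫ ω, f ω ∂μ with hc
  have hg0 : g 0 = fun _ => c := by
    rw [hg]; show μ[f| coordSigma d E 0] = _; rw [coordSigma_zero, condExp_bot]
  set a : ℕ → ℝ := fun k => ∫ ω, (g (k + 1) ω - g k ω) ^ 2 ∂μ with ha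
  set S : ℕ → ℝ := fun n => ∫ ω, (g n ω - c) ^ 2 ∂μ with hSdef
  have hgcsm : ∀ n, StronglyMeasurable[coordSigma d E n] (fun ω => g n ω - c) :=
    fun n => (hgsm n).sub stronglyMeasurable_const
  have hVsm : ∀ n, StronglyMeasurable[coordSigma d E (n+1)] (fun ω => g (n+1) ω - g n ω) :=
    fun n => (hgsm (n+1)).sub ((hgsm n).mono (coordSigma_mono E n.le_succ))
  -- partial sums
  have hS : ∀ n, S n = ∑ k ∈ Finset.range n, a k := by
    intro n
    induction n with
    | zero => simp [hSdef, hg0]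
    | succ n ih =>
      have hI1 : Integrable (fun ω => (g n ω - c) ^ 2) μ := hIntF n (fun ω => (g n ω - c) ^ 2) (by exact (hgcsm n).pow 2)
      have hI2 : Integrable (fun ω => 2 * ((g n ω - c) * (g (n+1) ω - g n ω))) μ :=
        hIntF (n+1) _ ((((hgcsm n).mono (coordSigma_mono E n.le_succ)).mul (hVsm n)).const_mul 2)
      have hI3 : Integrable (fun ω => (g (n+1) ω - g n ω) ^ 2) μ := hIntF (n+1) (fun ω => (g (n+1) ω - g n ω) ^ 2) (by exact (hVsm n).pow 2)
      have hI12 : Integrable (fun ω => (g n ω - c) ^ 2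
          + 2 * ((g n ω - c) * (g (n+1) ω - g n ω))) μ := hI1.add hI2
      have hstep : S (n+1) = S n + 2 * ∫ ω, (g n ω - c) * (g (n+1) ω - g n ω) ∂μ + a n := by
        have heq : S (n+1) = ∫ ω, (((g n ω - c) ^ 2
            + 2 * ((g n ω - c) * (g (n+1) ω - g n ω))) + (g (n+1) ω - g n ω) ^ 2) ∂μ := by
          simp only [hSdef]
          exact integral_congr_ae (Filter.Eventually.of_forall fun ω => by ring)
        rw [heq, integral_add hI12 hI3, integral_add hI1 hI2, integral_const_mul]
      rw [hstep, hcrossV n _ (hgcsm n), Finset.sum_range_succ, ih]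
      ring
  -- variance splitting
  have hgmem : ∀ n, MemLp (g n) 2 μ := by
    intro n
    obtain ⟨C, hC⟩ := bounded_of_coordSigma_stronglyMeasurable E (hgsm n)
    exact MemLp.of_bound (hgsm' n).aestronglyMeasurable C
      (Filter.Eventually.of_forall fun ω => by simpa [Real.norm_eq_abs] using hC ω)
  have hfg2 : ∀ n, Integrable (fun ω => (f ω - g n ω) ^ 2) μ :=
    fun n => (hf.sub (hgmem n)).integrable_sq
  have hvar_eq : variance f μ = ∫ ω, (f ω - c) ^ 2 ∂μ := by
    rw [variance_eq_integral hf.1.aemeasurable]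
  have hsplit : ∀ n, variance f μ = (∫ ω, (f ω - g n ω) ^ 2 ∂μ) + S n := by
    intro n
    have hIC : Integrable (fun ω => 2 * ((g n ω - c) * (f ω - g n ω))) μ := by
      have := hIntMul n (fun ω => g n ω - c) (fun ω => f ω - g n ω) (hgcsm n)
        ((hfi.sub (hIntF n (g n) (hgsm n))))
      simpa using (this.const_mul 2)
    have hI12 : Integrable (fun ω => (f ω - g n ω) ^ 2
        + 2 * ((g n ω - c) * (f ω - g n ω))) μ := (hfg2 n).add hIC
    have h1 : variance f μ = ∫ ω, ((f ω - g n ω) ^ 2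
        + 2 * ((g n ω - c) * (f ω - g n ω)) + (g n ω - c) ^ 2) ∂μ := by
      rw [hvar_eq]
      exact integral_congr_ae (Filter.Eventually.of_forall fun ω => by ring)
    rw [h1, integral_add hI12 (hIntF n (fun ω => (g n ω - c) ^ 2) (by exact (hgcsm n).pow 2)),
      integral_add (hfg2 n) hIC, integral_const_mul]
    have h2 : ∫ ω, (g n ω - c) * (f ω - g n ω) ∂μ = 0 := hcross n _ (hgcsm n)
    rw [h2]
    simp only [hSdef]
    ring
  -- r n = ∫ f² - ∫ gₙ²
  have hf2 : Integrable (fun ω => f ω ^ 2) μ := hf.integrable_sq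
  have hgf_eq : ∀ n, ∫ ω, g n ω * f ω ∂μ = ∫ ω, (g n ω) ^ 2 ∂μ := by
    intro n
    rw [← hpull n n le_rfl (g n) (hgsm n)]
    exact integral_congr_ae (Filter.Eventually.of_forall fun ω => by ring)
  have hr : ∀ n, ∫ ω, (f ω - g n ω) ^ 2 ∂μ
      = (∫ ω, f ω ^ 2 ∂μ) - ∫ ω, (g n ω) ^ 2 ∂μ := by
    intro n
    have hIgf : Integrable (fun ω => 2 * (g n ω * f ω)) μ :=
      ((hIntMul n (g n) f (hgsm n) hfi)).const_mul 2
    have hI12 : Integrable (fun ω => f ω ^ 2 - 2 * (g n ω * f ω)) μ := hf2.sub hIgf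
    have h1 : ∫ ω, (f ω - g n ω) ^ 2 ∂μ
        = ∫ ω, (f ω ^ 2 - 2 * (g n ω * f ω) + (g n ω) ^ 2) ∂μ :=
      integral_congr_ae (Filter.Eventually.of_forall fun ω => by ring)
    rw [h1, integral_add hI12 (hIntF n (fun ω => (g n ω) ^ 2) (by exact (hgsm n).pow 2)),
      integral_sub hf2 hIgf, integral_const_mul, hgf_eq n]
    ring
  -- ∫ gₙ² ≤ ∫ f²
  have hub : ∀ n, ∫ ω, (g n ω) ^ 2 ∂μ ≤ ∫ ω, f ω ^ 2 ∂μ := by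
    intro n
    have hIg2 : Integrable (fun ω => (g n ω) ^ 2) μ := hIntF n (fun ω => (g n ω) ^ 2) (by exact (hgsm n).pow 2)
    have h2 : ∫ ω, g n ω * f ω ∂μ ≤ ∫ ω, ((g n ω) ^ 2 + f ω ^ 2) / 2 ∂μ := by
      refine integral_mono (hIntMul n (g n) f (hgsm n) hfi) ((hIg2.add hf2).div_const 2) ?_
      intro ω
      nlinarith [sq_nonneg (g n ω - f ω)]
    rw [integral_div, integral_add hIg2 hf2] at h2
    rw [← hgf_eq n] at *
    linarith
  -- L² convergence of ∫ gₙ² to ∫ f²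
  set L : ℝ := ∫ ω, f ω ^ 2 ∂μ with hL
  set u : ℕ → ℝ := fun n => ∫ ω, (g n ω) ^ 2 ∂μ with hu
  have hunn : ∀ n, 0 ≤ u n := fun n => integral_nonneg fun ω => sq_nonneg _
  have hutend : Filter.Tendsto u Filter.atTop (nhds L) := by
    obtain ⟨f', hf'_sm, hf'_eq⟩ : ∃ f', StronglyMeasurable f' ∧ f =ᵐ[μ] f' :=
      ⟨hf.1.mk f, hf.1.stronglyMeasurable_mk, hf.1.ae_eq_mk⟩
    have hf' : MemLp f' 2 μ := hf.ae_eq hf'_eq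
    have hf'i : Integrable f' μ := hfi.congr hf'_eq
    set F : Filtration ℕ (MeasurableSpace.pi : MeasurableSpace (Config d)) :=
      ⟨fun n => coordSigma d E n, fun _ _ h => coordSigma_mono E h, hle⟩ with hF
    have hmeas_sup : StronglyMeasurable[⨆ n, F n] f' := by
      have : (⨆ n, (F n : MeasurableSpace (Config d))) = MeasurableSpace.pi :=
        iSup_coordSigma E
      rw [this]
      exact hf'_sm
    have hae0 := hf'i.tendsto_ae_condExp hmeas_sup
    have hcongr : ∀ n : ℕ, g n =ᵐ[μ] μ[f'| F n] := fun n => condExp_congr_ae hf'_eq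
    have hae : ∀ᵐ ω ∂μ, Filter.Tendsto (fun n => g n ω) Filter.atTop (nhds (f' ω)) := by
      have hall : ∀ᵐ ω ∂μ, ∀ n : ℕ, g n ω = (μ[f'| F n]) ω := ae_all_iff.mpr hcongr
      filter_upwards [hall, hae0] with ω h1 h2
      rw [show (fun n => g n ω) = fun n => (μ[f'| F n]) ω from funext h1]
      exact h2
    -- Fatou
    have haesq : ∀ᵐ ω ∂μ, Filter.Tendsto (fun n => ENNReal.ofReal ((g n ω) ^ 2))
        Filter.atTop (nhds (ENNReal.ofReal (f' ω ^ 2))) := by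
      filter_upwards [hae] with ω h
      exact (ENNReal.continuous_ofReal.tendsto _).comp (h.pow 2)
    have hliminf_eq : ∀ᵐ ω ∂μ, Filter.liminf (fun n => ENNReal.ofReal ((g n ω) ^ 2))
        Filter.atTop = ENNReal.ofReal (f' ω ^ 2) := by
      filter_upwards [haesq] with ω h
      exact h.liminf_eq
    have hmeas2 : ∀ n : ℕ, Measurable fun ω => ENNReal.ofReal ((g n ω) ^ 2) :=
      fun n => ((hgsm' n).measurable.pow_const 2).ennreal_ofReal
    have hFatou : ∫⁻ ω, ENNReal.ofReal (f' ω ^ 2) ∂μ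
        ≤ Filter.liminf (fun n => ∫⁻ ω, ENNReal.ofReal ((g n ω) ^ 2) ∂μ) Filter.atTop := by
      calc ∫⁻ ω, ENNReal.ofReal (f' ω ^ 2) ∂μ
          = ∫⁻ ω, Filter.liminf (fun n => ENNReal.ofReal ((g n ω) ^ 2)) Filter.atTop ∂μ :=
            (lintegral_congr_ae hliminf_eq).symm
        _ ≤ _ := lintegral_liminf_le hmeas2
    have hu_eq : ∀ n : ℕ, ∫⁻ ω, ENNReal.ofReal ((g n ω) ^ 2) ∂μ = ENNReal.ofReal (u n) := by
      intro n
      rw [← ofReal_integral_eq_lintegral_ofReal (hIntF n (fun ω => (g n ω) ^ 2) (by exact (hgsm n).pow 2))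
        (Filter.Eventually.of_forall fun ω => sq_nonneg _)]
    have hff2 : (fun ω => f ω ^ 2) =ᵐ[μ] fun ω => f' ω ^ 2 :=
      hf'_eq.mono fun ω h => by simp only [h]
    have hL_eq : ∫⁻ ω, ENNReal.ofReal (f' ω ^ 2) ∂μ = ENNReal.ofReal L := by
      rw [← ofReal_integral_eq_lintegral_ofReal hf'.integrable_sq
        (Filter.Eventually.of_forall fun ω => sq_nonneg _), hL]
      congr 1
      exact (integral_congr_ae hff2).symm
    have hbdd_above : Filter.IsBoundedUnder (· ≤ ·) Filter.atTop u :=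
      Filter.isBoundedUnder_of ⟨L, hub⟩
    have hbdd_below : Filter.IsBoundedUnder (· ≥ ·) Filter.atTop u :=
      Filter.isBoundedUnder_of ⟨0, hunn⟩
    have hcob_ge : Filter.IsCoboundedUnder (· ≥ ·) Filter.atTop u :=
      hbdd_above.isCoboundedUnder_ge
    have hcob_le : Filter.IsCoboundedUnder (· ≤ ·) Filter.atTop u :=
      hbdd_below.isCoboundedUnder_le
    have hmono : Monotone ENNReal.ofReal := fun x y h => ENNReal.ofReal_le_ofReal h
    have hmap : ENNReal.ofReal (Filter.liminf u Filter.atTop)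
        = Filter.liminf (fun n => ENNReal.ofReal (u n)) Filter.atTop := by
      have := hmono.map_liminf_of_continuousAt (F := Filter.atTop) u
        (ENNReal.continuous_ofReal.continuousAt) hcob_ge hbdd_below
      exact this
    have hliminf_ge : L ≤ Filter.liminf u Filter.atTop := by
      have h1 : ENNReal.ofReal L ≤ ENNReal.ofReal (Filter.liminf u Filter.atTop) := by
        rw [hmap]
        calc ENNReal.ofReal L = ∫⁻ ω, ENNReal.ofReal (f' ω ^ 2) ∂μ := hL_eq.symm
          _ ≤ Filter.liminf (fun n => ∫⁻ ω, ENNReal.ofReal ((g n ω) ^ 2) ∂μ) Filter.atTop :=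
              hFatou
          _ = Filter.liminf (fun n => ENNReal.ofReal (u n)) Filter.atTop := by
              simp_rw [hu_eq]
      have h0L : 0 ≤ Filter.liminf u Filter.atTop :=
        Filter.le_liminf_of_le hcob_ge (Filter.Eventually.of_forall hunn)
      exact (ENNReal.ofReal_le_ofReal_iff h0L).mp h1
    have hlimsup_le : Filter.limsup u Filter.atTop ≤ L :=
      Filter.limsup_le_of_le hcob_le (Filter.Eventually.of_forall hub)
    exact tendsto_of_le_liminf_of_limsup_le hliminf_ge hlimsup_le hbdd_above hbdd_below
  -- conclusion
  have hmInc : (fun k : ℕ => ∫ ω, (mInc d E μ f (k + 1) ω) ^ 2 ∂μ) = a := by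
    funext k
    simp only [ha]
    refine integral_congr_ae (Filter.Eventually.of_forall fun ω => ?_)
    simp only [hg, mInc, Pi.sub_apply, Nat.add_sub_cancel]
  rw [hmInc]
  have hnn : ∀ k, 0 ≤ a k := fun k => integral_nonneg fun ω => sq_nonneg _
  rw [hasSum_iff_tendsto_nat_of_nonneg hnn]
  have hSn : ∀ n, ∑ k ∈ Finset.range n, a k = variance f μ - L + u n := by
    intro n
    have h2 := hsplit n
    rw [hr n] at h2
    rw [← hS n]
    linarith
  rw [show (fun n => ∑ k ∈ Finset.range n, a k) = fun n => variance f μ - L + u n from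
    funext hSn]
  have := hutend.const_add (variance f μ - L)
  simpa using this

lemma integral_abs_pos {W : Config d → ℝ} (hWsm : StronglyMeasurable W) {C : ℝ}
    (hC : ∀ ω, |W ω| ≤ C) (ha : 0 < ∫ ω, W ω ^ 2 ∂μ) : 0 < ∫ ω, |W ω| ∂μ := by
  have habs : Integrable (fun ω => |W ω|) μ :=
    integrable_of_bdd (continuous_abs.comp_stronglyMeasurable hWsm).aestronglyMeasurable (fun ω => by simpa using hC ω)
  rcases (show (0:ℝ) ≤ ∫ ω, |W ω| ∂μ from integral_nonneg fun ω => abs_nonneg (W ω)).lt_or_eq with h | h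
  · exact h
  · exfalso
    have h0 : (fun ω => |W ω|) =ᵐ[μ] 0 :=
      (integral_eq_zero_iff_of_nonneg (fun ω => abs_nonneg (W ω)) habs).mp h.symm
    have h2 : (fun ω => W ω ^ 2) =ᵐ[μ] 0 := by
      filter_upwards [h0] with ω hω
      have : |W ω| = 0 := hω
      simp only [Pi.zero_apply]
      nlinarith [this, sq_abs (W ω)]
    rw [integral_eq_zero_of_ae h2] at ha
    exact lt_irrefl 0 ha

lemma xlogx_ge {x : ℝ} (hx : 0 < x) : x - 1 ≤ x * Real.log x := by
  have h := Real.log_le_sub_one_of_pos (inv_pos.mpr hx)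
  rw [Real.log_inv] at h
  have hx' : x ≠ 0 := hx.ne'
  have : -Real.log x ≤ x⁻¹ - 1 := h
  nlinarith [mul_pos hx (inv_pos.mpr hx), mul_inv_cancel₀ hx']

/-- The Falik–Samorodnitsky entropy lower bound. -/
lemma le_entropy_sq {W : Config d → ℝ} (hWsm : StronglyMeasurable W) {C : ℝ}
    (hC : ∀ ω, |W ω| ≤ C) (ha : 0 < ∫ ω, W ω ^ 2 ∂μ) :
    (∫ ω, W ω ^ 2 ∂μ) * Real.log ((∫ ω, W ω ^ 2 ∂μ) / (∫ ω, |W ω| ∂μ) ^ 2)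
      ≤ entropy μ (fun ω => W ω ^ 2) := by
  set b : ℝ := ∫ ω, |W ω| ∂μ with hbdef
  set a : ℝ := ∫ ω, W ω ^ 2 ∂μ with hadef
  have hb : 0 < b := integral_abs_pos hWsm hC ha
  -- integrability of all integrands involved
  have hWm : StronglyMeasurable (fun ω => W ω ^ 2) := hWsm.pow 2
  have hW2 : Integrable (fun ω => W ω ^ 2) μ :=
    integrable_of_bdd hWm.aestronglyMeasurable (C := C ^ 2) (fun ω => by
      rw [abs_pow]
      exact pow_le_pow_left₀ (abs_nonneg _) (hC ω) 2)
  have habs : Integrable (fun ω => |W ω|) μ :=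
    integrable_of_bdd (continuous_abs.comp_stronglyMeasurable hWsm).aestronglyMeasurable
      (fun ω => by simpa using hC ω)
  -- the entropy integrand is a bounded continuous function of `W`
  have hφcont : Continuous fun t : ℝ => t ^ 2 * Real.log (t ^ 2 / a) := by
    have h1 : Continuous fun t : ℝ => (t ^ 2 / a) * Real.log (t ^ 2 / a) :=
      Real.continuous_mul_log.comp ((continuous_pow 2).div_const a)
    have h2 : (fun t : ℝ => t ^ 2 * Real.log (t ^ 2 / a))
        = fun t : ℝ => a * ((t ^ 2 / a) * Real.log (t ^ 2 / a)) := by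
      funext t
      field_simp
    rw [h2]
    exact continuous_const.mul h1
  obtain ⟨M, hM⟩ := (isCompact_Icc (a := -C) (b := C)).exists_bound_of_continuousOn
    hφcont.continuousOn
  have hent_int : Integrable (fun ω => W ω ^ 2 * Real.log (W ω ^ 2 / a)) μ := by
    refine integrable_of_bdd
      ((hφcont.comp_stronglyMeasurable hWsm).aestronglyMeasurable) (C := |M|) (fun ω => ?_)
    have := hM (W ω) (abs_le.mp (hC ω))
    rw [Real.norm_eq_abs] at this
    exact this.trans (le_abs_self M)
  -- pointwise inequality
  have hpt : ∀ ω, W ω ^ 2 * Real.log (a / b ^ 2) + 2 * (W ω ^ 2 - a / b * |W ω|)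
      ≤ W ω ^ 2 * Real.log (W ω ^ 2 / a) := by
    intro ω
    rcases eq_or_ne (W ω) 0 with h0 | h0
    · simp [h0]
    · set y : ℝ := |W ω| with hy
      have hy0 : 0 < y := abs_pos.mpr h0
      set x : ℝ := y * b / a with hx
      have hx0 : 0 < x := div_pos (mul_pos hy0 hb) ha
      have hkey : x - 1 ≤ x * Real.log x := xlogx_ge hx0
      have hW2y : W ω ^ 2 = y ^ 2 := (sq_abs (W ω)).symm
      have hlog_split : Real.log (W ω ^ 2 / a) = Real.log (a / b ^ 2) + 2 * Real.log x := by
        rw [hW2y]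
        have h1 : y ^ 2 / a = (a / b ^ 2) * x ^ 2 := by
          rw [hx]
          field_simp
        rw [h1, Real.log_mul (by positivity) (by positivity), Real.log_pow]
        push_cast
        ring
      rw [hlog_split, hW2y]
      have hkey2 : y ^ 2 - a / b * y ≤ y ^ 2 * Real.log x := by
        have h3 : x ^ 2 - x ≤ x ^ 2 * Real.log x := by nlinarith
        have h4 : (a / b) ^ 2 * (x ^ 2 - x) ≤ (a / b) ^ 2 * (x ^ 2 * Real.log x) := by
          nlinarith [sq_nonneg (a / b)]
        have h5 : (a / b) ^ 2 * x ^ 2 = y ^ 2 := by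
          rw [hx]
          field_simp
        have h6 : (a / b) ^ 2 * x = a / b * y := by
          rw [hx]
          field_simp
        calc y ^ 2 - a / b * y = (a / b) ^ 2 * (x ^ 2 - x) := by rw [mul_sub, h5, h6]
          _ ≤ (a / b) ^ 2 * (x ^ 2 * Real.log x) := h4
          _ = y ^ 2 * Real.log x := by rw [← mul_assoc, h5]
      nlinarith
  -- integrate
  have habs' : Integrable (fun ω => a / b * |W ω|) μ := habs.const_mul (a / b)
  have hsub : Integrable (fun ω => W ω ^ 2 - a / b * |W ω|) μ := hW2.sub habs'
  have hsub2 : Integrable (fun ω => 2 * (W ω ^ 2 - a / b * |W ω|)) μ := hsub.const_mul 2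
  have hmulc : Integrable (fun ω => W ω ^ 2 * Real.log (a / b ^ 2)) μ := hW2.mul_const _
  have hRHSint : Integrable (fun ω => W ω ^ 2 * Real.log (a / b ^ 2)
      + 2 * (W ω ^ 2 - a / b * |W ω|)) μ := hmulc.add hsub2
  have hint := integral_mono hRHSint hent_int hpt
  have hLHS : ∫ ω, (W ω ^ 2 * Real.log (a / b ^ 2) + 2 * (W ω ^ 2 - a / b * |W ω|)) ∂μ
      = a * Real.log (a / b ^ 2) := by
    rw [integral_add hmulc hsub2, integral_mul_const, integral_const_mul,
      integral_sub hW2 habs', integral_const_mul]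
    have : a / b * b = a := div_mul_cancel₀ a hb.ne'
    rw [← hadef, ← hbdef, this]
    ring
  rw [hLHS] at hint
  exact hint

lemma entropy_of_sq_zero {W : Config d → ℝ} (hWsm : StronglyMeasurable W) {C : ℝ}
    (hC : ∀ ω, |W ω| ≤ C) (h0 : ∫ ω, W ω ^ 2 ∂μ = 0) :
    entropy μ (fun ω => W ω ^ 2) = 0 := by
  have hint : Integrable (fun ω => W ω ^ 2) μ :=
    integrable_of_bdd (hWsm.pow 2).aestronglyMeasurable (C := C ^ 2) (fun ω => by
      rw [abs_pow]
      exact pow_le_pow_left₀ (abs_nonneg _) (hC ω) 2)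
  have hae : (fun ω => W ω ^ 2) =ᵐ[μ] 0 :=
    (integral_eq_zero_iff_of_nonneg (fun ω => sq_nonneg (W ω)) hint).mp h0
  refine integral_eq_zero_of_ae ?_
  filter_upwards [hae] with ω hω
  have : W ω ^ 2 = 0 := hω
  simp [this]

end Mart

lemma log_sum_aux {a b A B : ℝ} (ha : 0 < a) (hb : 0 < b) (hA : 0 < A) (hB : 0 < B) :
    a * (Real.log (A / B) + 1) - b ^ 2 * (A / B) ≤ a * Real.log (a / b ^ 2) := by
  set P := A / B with hP
  set Q := a / b ^ 2 with hQ
  have hP0 : 0 < P := div_pos hA hB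
  have hQ0 : 0 < Q := div_pos ha (pow_pos hb 2)
  have h1 : Real.log (P / Q) ≤ P / Q - 1 := Real.log_le_sub_one_of_pos (div_pos hP0 hQ0)
  have h2 : Real.log P - Real.log Q ≤ P / Q - 1 := by
    rwa [Real.log_div hP0.ne' hQ0.ne'] at h1
  have h3 : a * (P / Q) = b ^ 2 * P := by
    rw [hQ]
    field_simp
  nlinarith [mul_le_mul_of_nonneg_left h2 ha.le]

lemma ofReal_sum_le (s : Finset ℕ) (c : ℕ → ℝ) :
    ENNReal.ofReal (∑ k ∈ s, c k) ≤ ∑ k ∈ s, ENNReal.ofReal (c k) := by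
  induction s using Finset.cons_induction with
  | empty => simp
  | cons k s hk ih =>
    rw [Finset.sum_cons, Finset.sum_cons]
    exact le_trans ENNReal.ofReal_add_le (add_le_add le_rfl ih)

/-- Lemma 2.6, Falik–Samorodnitsky. For any `f ∈ L²(π)` with
`0 < Var(f) < ∞` and `Σ_k (E|V_k|)² < ∞`,
`Var(f) log(Var(f) / Σ_k (E|V_k|)²) ≤ Σ_k Ent(V_k²)`. -/
theorem statement_4 (d : ℕ) (p : ℝ) (hp0 : 0 < p) (hp1 : p < 1)
    (μ : Measure (Config d)) (hμ : IsBernoulli d p μ) (E : ℕ ≃ Edge d)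
    (f : Config d → ℝ) (hf : MemLp f 2 μ) (hvar : 0 < variance f μ)
    (hsum : Summable (fun k : ℕ => (∫ ω, |mInc d E μ f (k + 1) ω| ∂μ) ^ 2)) :
    ENNReal.ofReal (variance f μ *
        Real.log (variance f μ / ∑' k : ℕ, (∫ ω, |mInc d E μ f (k + 1) ω| ∂μ) ^ 2))
      ≤ ∑' k : ℕ, ENNReal.ofReal (entropy μ (fun ω => (mInc d E μ f (k + 1) ω) ^ 2)) := by
  classical
  haveI : IsProbabilityMeasure μ := hμ.1
  have h1 : HasSum (fun k : ℕ => ∫ ω, (mInc d E μ f (k + 1) ω) ^ 2 ∂μ) (variance f μ) :=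
    hasSum_mInc_sq E hf
  set W : ℕ → Config d → ℝ := fun k => mInc d E μ f (k + 1) with hWdef
  set A : ℝ := variance f μ with hA
  set B : ℝ := ∑' k : ℕ, (∫ ω, |W k ω| ∂μ) ^ 2 with hB
  set a : ℕ → ℝ := fun k => ∫ ω, (W k ω) ^ 2 ∂μ with ha
  set β : ℕ → ℝ := fun k => (∫ ω, |W k ω| ∂μ) ^ 2 with hβ
  have hWsm : ∀ k, StronglyMeasurable[coordSigma d E (k + 1)] (W k) := by
    intro k
    exact stronglyMeasurable_condExp.sub
      (stronglyMeasurable_condExp.mono (coordSigma_mono E (Nat.sub_le _ _)))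
  have hWsm' : ∀ k, StronglyMeasurable (W k) := fun k => (hWsm k).mono (coordSigma_le E _)
  have hWbd : ∀ k, ∃ C, ∀ ω, |W k ω| ≤ C :=
    fun k => bounded_of_coordSigma_stronglyMeasurable E (hWsm k)
  have hann : ∀ k, 0 ≤ a k := fun k => integral_nonneg fun ω => sq_nonneg _
  have hbnn : ∀ k, 0 ≤ β k := fun k => sq_nonneg _
  -- B is positive
  have hex : ∃ k, a k ≠ 0 := by
    by_contra hcon
    push_neg at hcon
    have hz : a = fun _ => (0 : ℝ) := funext fun k => hcon k
    rw [hz] at h1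
    exact absurd (h1.unique hasSum_zero) (ne_of_gt hvar)
  obtain ⟨k0, hk0⟩ := hex
  have hak0 : 0 < a k0 := (hann k0).lt_of_ne (Ne.symm hk0)
  obtain ⟨C0, hC0⟩ := hWbd k0
  have hb0 : 0 < ∫ ω, |W k0 ω| ∂μ := integral_abs_pos (hWsm' k0) hC0 hak0
  have hB0 : 0 < B := by
    calc (0 : ℝ) < β k0 := pow_pos hb0 2
      _ ≤ B := hsum.le_tsum k0 fun j _ => hbnn j
  have hA0 : 0 < A := hvar
  -- per-index entropy bound
  have key : ∀ k, a k * (Real.log (A / B) + 1) - β k * (A / B)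
      ≤ entropy μ (fun ω => (W k ω) ^ 2) := by
    intro k
    obtain ⟨C, hC⟩ := hWbd k
    rcases (hann k).lt_or_eq with hak | hak
    · have hb : 0 < ∫ ω, |W k ω| ∂μ := integral_abs_pos (hWsm' k) hC hak
      have hent := le_entropy_sq (hWsm' k) hC hak
      have hlog := log_sum_aux hak hb hA0 hB0
      exact le_trans hlog hent
    · rw [entropy_of_sq_zero (hWsm' k) hC hak.symm, ← hak]
      have : 0 ≤ β k * (A / B) := mul_nonneg (hbnn k) (div_pos hA0 hB0).le
      nlinarith
  -- summing up
  have hc : HasSum (fun k => a k * (Real.log (A / B) + 1) - β k * (A / B))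
      (A * (Real.log (A / B) + 1) - B * (A / B)) :=
    (h1.mul_right _).sub (hsum.hasSum.mul_right _)
  have hval : A * (Real.log (A / B) + 1) - B * (A / B) = A * Real.log (A / B) := by
    field_simp
    ring
  rw [hval] at hc
  refine le_of_tendsto' ((ENNReal.continuous_ofReal.tendsto _).comp hc) (fun s => ?_)
  calc ENNReal.ofReal (∑ k ∈ s, (a k * (Real.log (A / B) + 1) - β k * (A / B)))
      ≤ ∑ k ∈ s, ENNReal.ofReal (a k * (Real.log (A / B) + 1) - β k * (A / B)) :=
        ofReal_sum_le s _
    _ ≤ ∑ k ∈ s, ENNReal.ofReal (entropy μ (fun ω => (W k ω) ^ 2)) :=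
        Finset.sum_le_sum fun k _ => ENNReal.ofReal_le_ofReal (key k)
    _ ≤ ∑' k, ENNReal.ofReal (entropy μ (fun ω => (W k ω) ^ 2)) := ENNReal.sum_le_tsum s

end Percolation
end
end

section
/- Let p ∈ (0,1). There exists a positive constant C depending only on p such that for every function g ≥ 0 on {0,1}, the entropy of g² with respect to the Bernoulli(p) measure satisfies Ent_{Ber(p)}[g²] ≤ C · (g(0) − g(1))². -/
open MeasureTheory ProbabilityTheory
open scoped ENNReal NNReal

noncomputable section

namespace Percolation

lemma integral_bern (p : ℝ) (hp0 : 0 ≤ p) (hp1 : p ≤ 1) (f : Bool → ℝ) :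
    ∫ b, f b ∂(bernoulliLaw p) = p * f true + (1 - p) * f false := by
  unfold bernoulliLaw
  rw [integral_add_measure ?_ ?_, integral_smul_measure, integral_smul_measure,
    integral_dirac, integral_dirac]
  · rw [ENNReal.toReal_ofReal hp0, ENNReal.toReal_ofReal (by linarith : (0:ℝ) ≤ 1-p)]
    simp [smul_eq_mul]
  · haveI : IsFiniteMeasure (ENNReal.ofReal p • Measure.dirac (true : Bool)) := by
      constructor; simp [lt_top_iff_ne_top]
    exact Integrable.of_finite
  · haveI : IsFiniteMeasure (ENNReal.ofReal (1-p) • Measure.dirac (false : Bool)) := by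
      constructor; simp [lt_top_iff_ne_top]
    exact Integrable.of_finite

lemma key_ineq (p u v : ℝ) (hp0 : 0 < p) (hp1 : p < 1) (hu : 0 ≤ u) (hv : 0 ≤ v) :
    p * u^2 * Real.log (u^2 / (p*u^2 + (1-p)*v^2))
      + (1-p) * v^2 * Real.log (v^2 / (p*u^2 + (1-p)*v^2)) ≤ 2 * (v - u)^2 := by
  have hq : 0 < 1 - p := by linarith
  rcases eq_or_lt_of_le (show (0:ℝ) ≤ p*u^2 + (1-p)*v^2 by positivity) with h0 | hEpos
  · have hu0 : u = 0 := by
      by_contra h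
      have h' : 0 < u := lt_of_le_of_ne hu (Ne.symm h)
      nlinarith [mul_pos hp0 (mul_pos h' h'), mul_nonneg hq.le (sq_nonneg v)]
    have hv0 : v = 0 := by
      by_contra h
      have h' : 0 < v := lt_of_le_of_ne hv (Ne.symm h)
      nlinarith [mul_pos hq (mul_pos h' h'), mul_nonneg hp0.le (sq_nonneg u)]
    simp [hu0, hv0]
  · have t1 : p * u^2 * Real.log (u^2 / (p*u^2 + (1-p)*v^2))
        ≤ p * u^2 * (u^2/(p*u^2 + (1-p)*v^2) - 1) := by
      rcases eq_or_lt_of_le (sq_nonneg u) with h | h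
      · simp [← h]
      · exact mul_le_mul_of_nonneg_left
          (Real.log_le_sub_one_of_pos (by positivity)) (by positivity)
    have t2 : (1-p) * v^2 * Real.log (v^2 / (p*u^2 + (1-p)*v^2))
        ≤ (1-p) * v^2 * (v^2/(p*u^2 + (1-p)*v^2) - 1) := by
      rcases eq_or_lt_of_le (sq_nonneg v) with h | h
      · simp [← h]
      · exact mul_le_mul_of_nonneg_left
          (Real.log_le_sub_one_of_pos (by positivity)) (by positivity)
    have hrw : p * u^2 * (u^2/(p*u^2 + (1-p)*v^2) - 1)
          + (1-p) * v^2 * (v^2/(p*u^2 + (1-p)*v^2) - 1)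
        = (p*u^4 + (1-p)*v^4 - (p*u^2 + (1-p)*v^2)^2) / (p*u^2 + (1-p)*v^2) := by
      field_simp
      ring
    have h2E : 0 ≤ 2*(p*u^2 + (1-p)*v^2) - p*(1-p)*(u+v)^2 := by
      nlinarith [mul_nonneg (mul_nonneg hp0.le hq.le) (sq_nonneg (u-v)),
        sq_nonneg (p*u), sq_nonneg ((1-p)*v)]
    have hfin : (p*u^4 + (1-p)*v^4 - (p*u^2 + (1-p)*v^2)^2) / (p*u^2 + (1-p)*v^2)
        ≤ 2 * (v - u)^2 := by
      rw [div_le_iff₀ hEpos]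
      nlinarith [mul_nonneg (sq_nonneg (u-v)) h2E]
    linarith

/-- Lemma 2.8, Bernoulli log-Sobolev inequality. For `p ∈ (0,1)` there is
`C = C(p) > 0` such that for every `g ≥ 0` on `{0,1}`,
`Ent_{Ber(p)}[g²] ≤ C (g(0) − g(1))²`. -/
theorem statement_6 (p : ℝ) (hp0 : 0 < p) (hp1 : p < 1) :
    ∃ C : ℝ, 0 < C ∧ ∀ g : Bool → ℝ, (∀ b, 0 ≤ g b) →
      entropy (bernoulliLaw p) (fun b => (g b) ^ 2) ≤ C * (g false - g true) ^ 2 := by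
  refine ⟨2, by norm_num, fun g hg => ?_⟩
  unfold entropy
  rw [integral_bern p hp0.le hp1.le]
  rw [integral_bern p hp0.le hp1.le]
  have := key_ineq p (g true) (g false) hp0 hp1 (hg true) (hg false)
  linarith

end Percolation
end
end
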